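/- arXiv:2410.16501 — 8 statements merged into one kernel-verified Lean document; each statement's English description precedes it below -/
import Mathlib

section
/- Let R be a relation with sensitive attribute s, ρ a representation constraint, and T a natural number with T ≤ |R|. If ⌈T · ρ(v)⌉ ≤ count_R(v) for every value v and Σ_v ⌈T · ρ(v)⌉ ≤ T (sum over the support of ρ), then there exists a subset R' ⊆ R with |R'| = T that satisfies ρ. -/
/-- The number of tuples in the relation `R` whose sensitive attribute `s` has value `v`. -/
def countVal {ι V : Type*} [DecidableEq V] (s : ι) (R : Finset (ι → V)) (v : V) : ℕ :=
  (R.filter fun t => t s = v).card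

/-- `R` satisfies the representation constraint `ρ` on the sensitive attribute `s`. -/
def satRC {ι V : Type*} [DecidableEq V] (s : ι) (ρ : V →₀ ℚ) (R : Finset (ι → V)) : Prop :=
  ∀ v : V, ρ v * (R.card : ℚ) ≤ (countVal s R v : ℚ)

/-!
Give every value `v` in the support of `ρ` the quota `⌈T · ρ(v)⌉`. Picking that many tuples of
`R` with value `v`, for each `v`, yields at most `T` tuples by the second hypothesis; pad them with
arbitrary tuples of `R` to a set `R'` of size exactly `T`. Then
`ρ(v) · |R'| = T · ρ(v) ≤ ⌈T · ρ(v)⌉ ≤ count_{R'}(v)`.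
-/

namespace Finset

variable {α β : Type*} [DecidableEq α] [DecidableEq β]

theorem exists_subset_card_eq_sum_quota (k : α → β) {R : Finset α} {K : Finset β} {n : β → ℕ}
    (hn : ∀ b ∈ K, n b ≤ #{a ∈ R | k a = b}) :
    ∃ S ⊆ R, #S = ∑ b ∈ K, n b ∧ ∀ b ∈ K, n b ≤ #{a ∈ S | k a = b} := by
  choose! f hf hf_card using fun b hb => exists_subset_card_eq (hn b hb)
  have hdisj : (K : Set β).PairwiseDisjoint f := fun b hb c hc hbc =>
    (disjoint_filter.2 fun _ _ hb hc => hbc (hb.symm.trans hc)).mono (hf b hb) (hf c hc)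
  refine ⟨K.biUnion f, ?_, ?_, fun b hb => ?_⟩
  · exact biUnion_subset.2 fun b hb => (hf b hb).trans (filter_subset _ _)
  · rw [card_biUnion hdisj]
    exact sum_congr rfl hf_card
  · rw [← hf_card b hb]
    refine card_le_card fun a ha => mem_filter.2 ⟨mem_biUnion.2 ⟨b, hb, ha⟩, ?_⟩
    exact (mem_filter.1 (hf b hb ha)).2

theorem exists_subset_card_eq_of_quota (k : α → β) {R : Finset α} {K : Finset β} {n : β → ℕ}
    {T : ℕ} (hn : ∀ b ∈ K, n b ≤ #{a ∈ R | k a = b}) (hsum : ∑ b ∈ K, n b ≤ T) (hT : T ≤ #R) :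
    ∃ R' ⊆ R, #R' = T ∧ ∀ b ∈ K, n b ≤ #{a ∈ R' | k a = b} := by
  obtain ⟨S, hSR, hS_card, hS_quota⟩ := exists_subset_card_eq_sum_quota k hn
  obtain ⟨R', hSR', hR'R, hR'_card⟩ := exists_subsuperset_card_eq hSR (hS_card ▸ hsum) hT
  exact ⟨R', hR'R, hR'_card, fun b hb =>
    (hS_quota b hb).trans (card_le_card (filter_subset_filter _ hSR'))⟩

end Finset

theorem postclean_sufficiency_general {ι V : Type*} [DecidableEq V]
    (s : ι) (R : Finset (ι → V)) (ρ : V →₀ ℚ)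
    (h0 : ∀ v, 0 ≤ ρ v)
    (T : ℕ) (hT : T ≤ R.card)
    (hceil : ∀ v : V, ⌈(T : ℚ) * ρ v⌉ ≤ (countVal s R v : ℤ))
    (hsumceil : ∑ v ∈ ρ.support, ⌈(T : ℚ) * ρ v⌉ ≤ (T : ℤ)) :
    ∃ R' ⊆ R, R'.card = T ∧ satRC s ρ R' := by
  classical
  have hquota : ∀ v ∈ ρ.support, ⌈(T : ℚ) * ρ v⌉₊ ≤ countVal s R v := fun v _ =>
    Nat.ceil_le.2 (by exact_mod_cast Int.ceil_le.1 (hceil v))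
  have hquota_sum : ∑ v ∈ ρ.support, ⌈(T : ℚ) * ρ v⌉₊ ≤ T := by
    have hcast : ∀ v, (⌈(T : ℚ) * ρ v⌉₊ : ℤ) = ⌈(T : ℚ) * ρ v⌉ := fun v =>
      Int.natCast_ceil_eq_ceil (mul_nonneg T.cast_nonneg (h0 v))
    exact_mod_cast (Finset.sum_congr rfl fun v _ => hcast v).trans_le hsumceil
  obtain ⟨R', hR'R, hR'_card, hR'_quota⟩ :=
    Finset.exists_subset_card_eq_of_quota (fun t => t s) hquota hquota_sum hT
  refine ⟨R', hR'R, hR'_card, fun v => ?_⟩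
  by_cases hv : v ∈ ρ.support
  · calc ρ v * (R'.card : ℚ) = T * ρ v := by rw [hR'_card, mul_comm]
      _ ≤ ⌈(T : ℚ) * ρ v⌉₊ := Nat.le_ceil _
      _ ≤ countVal s R' v := by exact_mod_cast hR'_quota v hv
  · simp [Finsupp.notMem_support_iff.1 hv]

/-- If `T ≤ |R|`, `⌈T · ρ(v)⌉ ≤ count_R(v)` for every value `v`, and
`∑_v ⌈T · ρ(v)⌉ ≤ T` (sum over the support of `ρ`), then there exists a subset
`R' ⊆ R` with `|R'| = T` satisfying `ρ`. -/
theorem postclean_sufficiency {ι V : Type*} [DecidableEq V]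
    (s : ι) (R : Finset (ι → V)) (ρ : V →₀ ℚ)
    (h0 : ∀ v, 0 ≤ ρ v) (h1 : ∀ v, ρ v ≤ 1)
    (hsum : ∑ v ∈ ρ.support, ρ v ≤ 1)
    (T : ℕ) (hT : T ≤ R.card)
    (hceil : ∀ v : V, ⌈(T : ℚ) * ρ v⌉ ≤ (countVal s R v : ℤ))
    (hsumceil : ∑ v ∈ ρ.support, ⌈(T : ℚ) * ρ v⌉ ≤ (T : ℤ)) :
    ∃ R' ⊆ R, R'.card = T ∧ satRC s ρ R' :=
  postclean_sufficiency_general s R ρ h0 T hT hceil hsumceil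
end

section
/- (Optimality of PostClean.) Let R be a relation with sensitive attribute s and ρ a representation constraint. Then the maximum cardinality of a subset of R satisfying ρ exists (the empty set always satisfies ρ) and equals the greatest T ∈ {0, …, |R|} such that ⌈T · ρ(v)⌉ ≤ count_R(v) for every value v and Σ_v ⌈T · ρ(v)⌉ ≤ T (sum over the support of ρ). -/
/-- The feasibility condition checked by PostClean for a target size `T`. -/
def goodSize {ι V : Type*} [DecidableEq V] (s : ι) (ρ : V →₀ ℚ) (R : Finset (ι → V))
    (T : ℕ) : Prop :=
  (∀ v : V, ⌈(T : ℚ) * ρ v⌉ ≤ (countVal s R v : ℤ)) ∧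
    ∑ v ∈ ρ.support, ⌈(T : ℚ) * ρ v⌉ ≤ (T : ℤ)

/-!
A subset of size `T` satisfying `ρ` must contain at least `⌈T · ρ(v)⌉` tuples with value `v`;
these fibres are disjoint, so `goodSize T` is necessary. Conversely, if `goodSize T` holds,
pick `⌈T · ρ(v)⌉` tuples of each value `v` in the support of `ρ` (at most `T` tuples in total)
and pad with arbitrary tuples of `R` up to size `T`. Hence the feasible sizes are exactly the
good sizes `T ≤ |R|`, and the maximum of both is the same number.
-/

open Finset

namespace PostClean

variable {ι V : Type*} [DecidableEq V] (s : ι)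

lemma countVal_mono {S R : Finset (ι → V)} (h : S ⊆ R) (v : V) :
    countVal s S v ≤ countVal s R v :=
  card_le_card (filter_subset_filter _ h)

lemma sum_countVal_le_card (S : Finset (ι → V)) (A : Finset V) :
    ∑ v ∈ A, countVal s S v ≤ S.card := by
  simp only [countVal, sum_card_fiberwise_eq_card_filter]
  exact card_filter_le _ _

lemma satRC_iff_ceil_le_countVal (ρ : V →₀ ℚ) (S : Finset (ι → V)) :
    satRC s ρ S ↔ ∀ v, ⌈(S.card : ℚ) * ρ v⌉ ≤ (countVal s S v : ℤ) := by
  simp only [satRC, Int.ceil_le, Int.cast_natCast, mul_comm]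

lemma goodSize_zero (ρ : V →₀ ℚ) (R : Finset (ι → V)) : goodSize s ρ R 0 := by
  simp [goodSize]

lemma goodSize_card_of_satRC {ρ : V →₀ ℚ} {S R : Finset (ι → V)} (hSR : S ⊆ R)
    (hS : satRC s ρ S) : goodSize s ρ R S.card := by
  rw [satRC_iff_ceil_le_countVal] at hS
  refine ⟨fun v => (hS v).trans (by exact_mod_cast countVal_mono s hSR v), ?_⟩
  calc ∑ v ∈ ρ.support, ⌈(S.card : ℚ) * ρ v⌉
      ≤ ∑ v ∈ ρ.support, (countVal s S v : ℤ) := sum_le_sum fun v _ => hS v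
    _ ≤ S.card := by exact_mod_cast sum_countVal_le_card s S ρ.support

lemma exists_subset_card_le_sum_of_le_countVal (R : Finset (ι → V)) (A : Finset V)
    {m : V → ℕ} (hm : ∀ v ∈ A, m v ≤ countVal s R v) :
    ∃ S ⊆ R, S.card ≤ ∑ v ∈ A, m v ∧ ∀ v ∈ A, m v ≤ countVal s S v := by
  classical
  have hfibre : ∀ v, ∃ F ⊆ R.filter (fun t => t s = v), v ∈ A → F.card = m v := by
    intro v
    by_cases hv : v ∈ A
    · obtain ⟨F, hF, hcard⟩ := exists_subset_card_eq (hm v hv)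
      exact ⟨F, hF, fun _ => hcard⟩
    · exact ⟨∅, empty_subset _, fun h => absurd h hv⟩
  choose F hFR hFcard using hfibre
  refine ⟨A.biUnion F, biUnion_subset.2 fun v _ => (hFR v).trans (filter_subset _ _), ?_, ?_⟩
  · calc (A.biUnion F).card ≤ ∑ v ∈ A, (F v).card := card_biUnion_le
      _ = ∑ v ∈ A, m v := sum_congr rfl fun v hv => hFcard v hv
  · intro v hv
    rw [← hFcard v hv]
    refine card_le_card fun t ht => mem_filter.2 ⟨mem_biUnion.2 ⟨v, hv, ht⟩, ?_⟩
    exact (mem_filter.1 (hFR v ht)).2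

lemma exists_subset_card_eq_of_le_countVal (R : Finset (ι → V)) (A : Finset V)
    {m : V → ℕ} (hm : ∀ v ∈ A, m v ≤ countVal s R v) {T : ℕ} (hmT : ∑ v ∈ A, m v ≤ T)
    (hTR : T ≤ R.card) :
    ∃ R' ⊆ R, R'.card = T ∧ ∀ v ∈ A, m v ≤ countVal s R' v := by
  obtain ⟨S, hSR, hScard, hSm⟩ := exists_subset_card_le_sum_of_le_countVal s R A hm
  obtain ⟨R', hSR', hR'R, hR'card⟩ := exists_subsuperset_card_eq hSR (hScard.trans hmT) hTR
  exact ⟨R', hR'R, hR'card, fun v hv => (hSm v hv).trans (countVal_mono s hSR' v)⟩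

lemma exists_subset_card_eq_satRC_of_goodSize {ρ : V →₀ ℚ} (h0 : ∀ v, 0 ≤ ρ v)
    {R : Finset (ι → V)} {T : ℕ} (hTR : T ≤ R.card) (hT : goodSize s ρ R T) :
    ∃ R' ⊆ R, R'.card = T ∧ satRC s ρ R' := by
  set m : V → ℕ := fun v => ⌈(T : ℚ) * ρ v⌉.toNat
  have hm_cast : ∀ v, (m v : ℤ) = ⌈(T : ℚ) * ρ v⌉ := fun v =>
    Int.toNat_of_nonneg (Int.ceil_nonneg (mul_nonneg T.cast_nonneg (h0 v)))
  have hmR : ∀ v ∈ ρ.support, m v ≤ countVal s R v := fun v _ => by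
    have := hT.1 v
    have := hm_cast v
    omega
  have hmT : ∑ v ∈ ρ.support, m v ≤ T := by
    have := hT.2
    rw [← sum_congr rfl fun v _ => hm_cast v] at this
    exact_mod_cast this
  obtain ⟨R', hR'R, hR'card, hR'm⟩ :=
    exists_subset_card_eq_of_le_countVal s R ρ.support hmR hmT hTR
  refine ⟨R', hR'R, hR'card, (satRC_iff_ceil_le_countVal s ρ R').2 fun v => ?_⟩
  rw [hR'card]
  by_cases hv : v ∈ ρ.support
  · rw [← hm_cast]
    exact_mod_cast hR'm v hv
  · simp [Finsupp.notMem_support_iff.1 hv]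

end PostClean

open PostClean in
theorem postclean_optimal_general {ι V : Type*} [DecidableEq V]
    (s : ι) (R : Finset (ι → V)) (ρ : V →₀ ℚ)
    (h0 : ∀ v, 0 ≤ ρ v) :
    ∃ R' ⊆ R, satRC s ρ R' ∧
      (∀ R'' ⊆ R, satRC s ρ R'' → R''.card ≤ R'.card) ∧
      IsGreatest {T : ℕ | T ≤ R.card ∧ goodSize s ρ R T} R'.card := by
  obtain ⟨T, hT⟩ : ∃ T, IsGreatest {T : ℕ | T ≤ R.card ∧ goodSize s ρ R T} T :=
    BddAbove.exists_isGreatest_of_nonempty ⟨R.card, fun _ hT => hT.1⟩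
      ⟨0, R.card.zero_le, goodSize_zero s ρ R⟩
  obtain ⟨R', hR'R, hR'card, hR'sat⟩ :=
    exists_subset_card_eq_satRC_of_goodSize s h0 hT.1.1 hT.1.2
  refine ⟨R', hR'R, hR'sat, fun R'' hR''R hR''sat => ?_, hR'card ▸ hT⟩
  exact hR'card ▸ hT.2 ⟨card_le_card hR''R, goodSize_card_of_satRC s hR''R hR''sat⟩

/-- Optimality of PostClean: there is a maximum-cardinality subset of `R` satisfying `ρ`,
and its cardinality is the greatest `T ∈ {0, …, |R|}` such that `⌈T · ρ(v)⌉ ≤ count_R(v)`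
for every value `v` and `∑_v ⌈T · ρ(v)⌉ ≤ T` (sum over the support of `ρ`). -/
theorem postclean_optimal {ι V : Type*} [DecidableEq V]
    (s : ι) (R : Finset (ι → V)) (ρ : V →₀ ℚ)
    (h0 : ∀ v, 0 ≤ ρ v) (h1 : ∀ v, ρ v ≤ 1)
    (hsum : ∑ v ∈ ρ.support, ρ v ≤ 1) :
    ∃ R' ⊆ R, satRC s ρ R' ∧
      (∀ R'' ⊆ R, satRC s ρ R'' → R''.card ≤ R'.card) ∧
      IsGreatest {T : ℕ | T ≤ R.card ∧ goodSize s ρ R T} R'.card :=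
  postclean_optimal_general s R ρ h0
end

section
/- Let R₁ and R₂ be relations with sensitive attribute s and ρ a representation constraint. If count_{R₁}(v) = count_{R₂}(v) for every value v (R₁ and R₂ are representatively equivalent), then the maximum cardinality of a subset of R₁ satisfying ρ equals the maximum cardinality of a subset of R₂ satisfying ρ. -/
/-- The maximum cardinality of a subset of `R` satisfying the representation constraint `ρ`.
It is well defined since the empty set satisfies every representation constraint. -/
noncomputable def maxSat {ι V : Type*} [DecidableEq V] (s : ι) (ρ : V →₀ ℚ)
    (R : Finset (ι → V)) : ℕ :=
  sSup {n : ℕ | ∃ R' ⊆ R, satRC s ρ R' ∧ R'.card = n}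

namespace Finset

variable {α β : Type*} [DecidableEq β] {f : α → β}

theorem card_eq_of_card_fiber_eq {A B : Finset α}
    (h : ∀ b, #{a ∈ A | f a = b} = #{a ∈ B | f a = b}) : #A = #B := by
  have hA : (A : Set α).MapsTo f ↑(A.image f ∪ B.image f) := fun a ha =>
    mem_union_left _ (mem_image_of_mem f ha)
  have hB : (B : Set α).MapsTo f ↑(A.image f ∪ B.image f) := fun a ha =>
    mem_union_right _ (mem_image_of_mem f ha)
  rw [card_eq_sum_card_fiberwise hA, card_eq_sum_card_fiberwise hB]
  exact sum_congr rfl fun b _ => h b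

theorem exists_subset_card_fiber_eq [DecidableEq α] {A B : Finset α}
    (h : ∀ b, #{a ∈ A | f a = b} ≤ #{a ∈ B | f a = b}) :
    ∃ C ⊆ B, ∀ b, #{a ∈ C | f a = b} = #{a ∈ A | f a = b} := by
  choose T hTB hT using fun b => exists_subset_card_eq (h b)
  have hTf : ∀ b, ∀ a ∈ T b, f a = b := fun b a ha => (mem_filter.1 (hTB b ha)).2
  refine ⟨(A.image f).biUnion T, biUnion_subset.2 fun b _ => (hTB b).trans (filter_subset _ _),
    fun b => ?_⟩
  by_cases hb : b ∈ A.image f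
  · have : {a ∈ (A.image f).biUnion T | f a = b} = T b := by
      ext a
      simp only [mem_filter, mem_biUnion]
      refine ⟨fun ⟨⟨w, _, ha⟩, hab⟩ => ?_, fun ha => ⟨⟨b, hb, ha⟩, hTf b a ha⟩⟩
      rwa [← hab, hTf w a ha]
    rw [this, hT]
  · have hA : {a ∈ A | f a = b} = ∅ :=
      filter_eq_empty_iff.2 fun a ha hab => hb (hab ▸ mem_image_of_mem f ha)
    rw [hA, card_empty, card_eq_zero, filter_eq_empty_iff]
    intro a ha hab
    obtain ⟨w, hw, haw⟩ := mem_biUnion.1 ha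
    exact hb (hab ▸ hTf w a haw ▸ hw)

end Finset

section

variable {ι V : Type*} [DecidableEq V] (s : ι) (ρ : V →₀ ℚ)

theorem countVal_mono {R R' : Finset (ι → V)} (h : R ⊆ R') (v : V) :
    countVal s R v ≤ countVal s R' v :=
  Finset.card_le_card (Finset.filter_subset_filter _ h)

theorem satRC_congr {R R' : Finset (ι → V)} (h : ∀ v, countVal s R v = countVal s R' v) :
    satRC s ρ R ↔ satRC s ρ R' := by
  simp only [satRC, Finset.card_eq_of_card_fiber_eq h, h]

theorem maxSat_le_maxSat_of_countVal_le {R₁ R₂ : Finset (ι → V)}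
    (h : ∀ v, countVal s R₁ v ≤ countVal s R₂ v) : maxSat s ρ R₁ ≤ maxSat s ρ R₂ := by
  classical
  refine csSup_le_csSup ⟨R₂.card, ?_⟩ ⟨0, ∅, Finset.empty_subset _, fun v => by simp, rfl⟩ ?_
  · rintro n ⟨R, hR, -, rfl⟩
    exact Finset.card_le_card hR
  · rintro n ⟨R, hR, hsat, rfl⟩
    obtain ⟨R', hR', hcount⟩ :=
      Finset.exists_subset_card_fiber_eq fun v => (countVal_mono s hR v).trans (h v)
    exact ⟨R', hR', (satRC_congr s ρ hcount).2 hsat,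
      Finset.card_eq_of_card_fiber_eq hcount⟩

end

theorem maxSat_eq_of_reprEquiv_general {ι V : Type*} [DecidableEq V]
    (s : ι) (ρ : V →₀ ℚ)
    (R₁ R₂ : Finset (ι → V))
    (hequiv : ∀ v : V, countVal s R₁ v = countVal s R₂ v) :
    maxSat s ρ R₁ = maxSat s ρ R₂ :=
  le_antisymm (maxSat_le_maxSat_of_countVal_le s ρ fun v => (hequiv v).le)
    (maxSat_le_maxSat_of_countVal_le s ρ fun v => (hequiv v).ge)

/-- If `R₁` and `R₂` are representatively equivalent (same counts for every sensitive
value), then the maximum cardinalities of their `ρ`-satisfying subsets coincide. -/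
theorem maxSat_eq_of_reprEquiv {ι V : Type*} [DecidableEq V]
    (s : ι) (ρ : V →₀ ℚ)
    (h0 : ∀ v, 0 ≤ ρ v) (h1 : ∀ v, ρ v ≤ 1)
    (hsum : ∑ v ∈ ρ.support, ρ v ≤ 1)
    (R₁ R₂ : Finset (ι → V))
    (hequiv : ∀ v : V, countVal s R₁ v = countVal s R₂ v) :
    maxSat s ρ R₁ = maxSat s ρ R₂ :=
  maxSat_eq_of_reprEquiv_general s ρ R₁ R₂ hequiv
end

section
/- (Consensus-FD decomposition.) Let R be a relation and Δ a finite set of FDs containing a consensus FD f = (∅, Y). A nonempty subset R' ⊆ R satisfies Δ if and only if there exists a value y such that R' ⊆ {t ∈ R : t Y = y} and R' satisfies Δ \ {f}. Equivalently, the S-repairs of R w.r.t. Δ are exactly the empty set together with the S-repairs of σ_{Y=y}R := {t ∈ R : t Y = y} w.r.t. Δ \ {f}, for the various values y. -/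
/-- `R` satisfies the functional dependency `f = (X, A)`. -/
def satFD {ι V : Type*} (R : Finset (ι → V)) (f : Finset ι × ι) : Prop :=
  ∀ t₁ ∈ R, ∀ t₂ ∈ R, (∀ a ∈ f.1, t₁ a = t₂ a) → t₁ f.2 = t₂ f.2

/-- `R` satisfies the finite set `Δ` of functional dependencies. -/
def satFDs {ι V : Type*} (Δ : Finset (Finset ι × ι)) (R : Finset (ι → V)) : Prop :=
  ∀ f ∈ Δ, satFD R f

/-
Satisfying the consensus FD `(∅, Y)` means that all tuples agree on `Y`; for a nonempty
relation this says exactly that it lies inside one selection `σ_{Y=y} R`, namely for `y`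
the `Y`-value of any of its tuples. The other FDs of `Δ` are untouched, and the empty
relation satisfies every FD.
-/

section
variable {ι V : Type*}

theorem satFDs_empty (Δ : Finset (Finset ι × ι)) : satFDs Δ (∅ : Finset (ι → V)) := by
  simp [satFDs, satFD]

theorem satFD_of_forall_eq {R : Finset (ι → V)} {A : ι} {y : V} (h : ∀ t ∈ R, t A = y)
    (X : Finset ι) : satFD R (X, A) :=
  fun t₁ h₁ t₂ h₂ _ => (h t₁ h₁).trans (h t₂ h₂).symm

theorem satFD_consensus_iff {R : Finset (ι → V)} {Y : ι} :
    satFD R (∅, Y) ↔ ∀ t₁ ∈ R, ∀ t₂ ∈ R, t₁ Y = t₂ Y := by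
  simp [satFD]

theorem satFDs_iff_of_mem [DecidableEq ι] {Δ : Finset (Finset ι × ι)} {f : Finset ι × ι}
    (hf : f ∈ Δ) (R : Finset (ι → V)) :
    satFDs Δ R ↔ satFD R f ∧ satFDs (Δ.erase f) R := by
  refine ⟨fun h => ⟨h f hf, fun g hg => h g (Finset.mem_of_mem_erase hg)⟩, ?_⟩
  rintro ⟨hfR, hrest⟩ g hg
  by_cases hgf : g = f
  · exact hgf ▸ hfR
  · exact hrest g (Finset.mem_erase.mpr ⟨hgf, hg⟩)

theorem subset_filter_eq_iff [DecidableEq V] {R R' : Finset (ι → V)} {Y : ι} {y : V} :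
    R' ⊆ R.filter (fun t => t Y = y) ↔ R' ⊆ R ∧ ∀ t ∈ R', t Y = y := by
  simp only [Finset.subset_iff, Finset.mem_filter]
  exact ⟨fun h => ⟨fun t ht => (h ht).1, fun t ht => (h ht).2⟩,
    fun h t ht => ⟨h.1 ht, h.2 t ht⟩⟩

variable [DecidableEq ι] [DecidableEq V] {R : Finset (ι → V)} {Δ : Finset (Finset ι × ι)}
  {Y : ι}

theorem satFDs_of_subset_filter (hf : ((∅ : Finset ι), Y) ∈ Δ) {R' : Finset (ι → V)}
    (h : ∃ y : V, R' ⊆ R.filter (fun t => t Y = y) ∧ satFDs (Δ.erase (∅, Y)) R') :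
    R' ⊆ R ∧ satFDs Δ R' := by
  obtain ⟨y, hsel, hrest⟩ := h
  obtain ⟨hsub, hY⟩ := subset_filter_eq_iff.mp hsel
  exact ⟨hsub, (satFDs_iff_of_mem hf R').mpr ⟨satFD_of_forall_eq hY ∅, hrest⟩⟩

theorem satFDs_iff_exists_subset_filter (hf : ((∅ : Finset ι), Y) ∈ Δ) {R' : Finset (ι → V)}
    (hsub : R' ⊆ R) (hne : R'.Nonempty) :
    satFDs Δ R' ↔
      ∃ y : V, R' ⊆ R.filter (fun t => t Y = y) ∧ satFDs (Δ.erase (∅, Y)) R' := by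
  refine ⟨fun hsat => ?_, fun h => (satFDs_of_subset_filter hf h).2⟩
  obtain ⟨t₀, ht₀⟩ := hne
  obtain ⟨hcons, hrest⟩ := (satFDs_iff_of_mem hf R').mp hsat
  exact ⟨t₀ Y, subset_filter_eq_iff.mpr
    ⟨hsub, fun t ht => satFD_consensus_iff.mp hcons t ht t₀ ht₀⟩, hrest⟩

end

theorem consensus_decomposition_general {ι V : Type*} [DecidableEq ι] [DecidableEq V]
    (R : Finset (ι → V)) (Δ : Finset (Finset ι × ι))
    (Y : ι) (hf : ((∅ : Finset ι), Y) ∈ Δ) :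
    (∀ R' ⊆ R, R'.Nonempty →
      (satFDs Δ R' ↔
        ∃ y : V, R' ⊆ R.filter (fun t => t Y = y) ∧ satFDs (Δ.erase (∅, Y)) R')) ∧
    (∀ R' : Finset (ι → V),
      (R' ⊆ R ∧ satFDs Δ R') ↔
        (R' = ∅ ∨ ∃ y : V, R' ⊆ R.filter (fun t => t Y = y) ∧
          satFDs (Δ.erase (∅, Y)) R')) := by
  refine ⟨fun R' hsub hne => satFDs_iff_exists_subset_filter hf hsub hne,
    fun R' => ⟨?_, ?_⟩⟩
  · rintro ⟨hsub, hsat⟩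
    rcases R'.eq_empty_or_nonempty with rfl | hne
    · exact Or.inl rfl
    · exact Or.inr ((satFDs_iff_exists_subset_filter hf hsub hne).mp hsat)
  · rintro (rfl | h)
    · exact ⟨Finset.empty_subset R, satFDs_empty Δ⟩
    · exact satFDs_of_subset_filter hf h

/-- Consensus-FD decomposition.  If `Δ` contains the consensus FD `f = (∅, Y)`, then a
nonempty subset `R' ⊆ R` satisfies `Δ` iff there is a value `y` such that
`R' ⊆ σ_{Y=y} R` and `R'` satisfies `Δ \ {f}`.  Equivalently, the S-repairs of `R`
w.r.t. `Δ` are exactly the empty set together with the S-repairs of `σ_{Y=y} R`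
w.r.t. `Δ \ {f}`, for the various values `y`. -/
theorem consensus_decomposition {ι V : Type*} [DecidableEq ι] [DecidableEq V]
    (R : Finset (ι → V)) (Δ : Finset (Finset ι × ι)) (hleg : ∀ f ∈ Δ, f.2 ∉ f.1)
    (Y : ι) (hf : ((∅ : Finset ι), Y) ∈ Δ) :
    (∀ R' ⊆ R, R'.Nonempty →
      (satFDs Δ R' ↔
        ∃ y : V, R' ⊆ R.filter (fun t => t Y = y) ∧ satFDs (Δ.erase (∅, Y)) R')) ∧
    (∀ R' : Finset (ι → V),
      (R' ⊆ R ∧ satFDs Δ R') ↔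
        (R' = ∅ ∨ ∃ y : V, R' ⊆ R.filter (fun t => t Y = y) ∧
          satFDs (Δ.erase (∅, Y)) R')) :=
  consensus_decomposition_general R Δ Y hf
end

section
/- (Common-LHS decomposition.) Let R be a relation and Δ a finite set of FDs, and suppose the attribute X is a common LHS of Δ, i.e., X ∈ Z for every FD (Z, A) ∈ Δ. Let Δ_{-X} := {(Z \ {X}, A) : (Z, A) ∈ Δ}. Then a subset R' ⊆ R satisfies Δ if and only if for every value x, the subset σ_{X=x}R' := {t ∈ R' : t X = x} satisfies Δ_{-X}. -/
/-! Within a selection `σ_{X=x} R` all tuples agree on `X`, so `X` can be dropped from the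
left-hand side of an FD there; conversely two tuples agreeing on a left-hand side containing `X`
lie in the same selection, namely the one with `x = t₁ X`. -/

section

variable {ι V : Type*} [DecidableEq ι] [DecidableEq V]

theorem satFD_filter_erase {R : Finset (ι → V)} {f : Finset ι × ι} (hR : satFD R f)
    (X : ι) (x : V) : satFD (R.filter fun t => t X = x) (f.1.erase X, f.2) := by
  intro t₁ ht₁ t₂ ht₂ hagree
  rw [Finset.mem_filter] at ht₁ ht₂
  refine hR t₁ ht₁.1 t₂ ht₂.1 fun a ha => ?_
  by_cases haX : a = X
  · rw [haX, ht₁.2, ht₂.2]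
  · exact hagree a (Finset.mem_erase.2 ⟨haX, ha⟩)

theorem satFD_of_forall_satFD_filter_erase {R : Finset (ι → V)} {f : Finset ι × ι} {X : ι}
    (hX : X ∈ f.1) (h : ∀ x, satFD (R.filter fun t => t X = x) (f.1.erase X, f.2)) :
    satFD R f := by
  intro t₁ ht₁ t₂ ht₂ hagree
  exact h (t₁ X) t₁ (Finset.mem_filter.2 ⟨ht₁, rfl⟩) t₂
    (Finset.mem_filter.2 ⟨ht₂, (hagree X hX).symm⟩)
    fun a ha => hagree a (Finset.mem_of_mem_erase ha)

end

theorem commonLHS_decomposition_general {ι V : Type*} [DecidableEq ι] [DecidableEq V]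
    (R : Finset (ι → V)) (Δ : Finset (Finset ι × ι))
    (X : ι) (hX : ∀ f ∈ Δ, X ∈ f.1) :
    ∀ R' ⊆ R,
      (satFDs Δ R' ↔
        ∀ x : V, satFDs (Δ.image fun f => (f.1.erase X, f.2))
          (R'.filter fun t => t X = x)) := by
  intro R' _
  simp only [satFDs, Finset.forall_mem_image]
  exact ⟨fun h x f hf => satFD_filter_erase (h f hf) X x,
    fun h f hf => satFD_of_forall_satFD_filter_erase (hX f hf) fun x => h x hf⟩

/-- Common-LHS decomposition.  If `X` is a common LHS attribute of `Δ`, then a subset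
`R' ⊆ R` satisfies `Δ` iff for every value `x`, the subset `σ_{X=x} R'` satisfies
`Δ₋X := {(Z \ {X}, A) : (Z, A) ∈ Δ}`. -/
theorem commonLHS_decomposition {ι V : Type*} [DecidableEq ι] [DecidableEq V]
    (R : Finset (ι → V)) (Δ : Finset (Finset ι × ι)) (hleg : ∀ f ∈ Δ, f.2 ∉ f.1)
    (X : ι) (hX : ∀ f ∈ Δ, X ∈ f.1) :
    ∀ R' ⊆ R,
      (satFDs Δ R' ↔
        ∀ x : V, satFDs (Δ.image fun f => (f.1.erase X, f.2))
          (R'.filter fun t => t X = x)) :=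
  commonLHS_decomposition_general R Δ X hX
end

section
/- (Proposition 3.6.) Let Δ be a finite set of FDs. Define a simplification step on finite FD sets as either (a) consensus-FD removal: if (∅, A) ∈ Δ, replace Δ by Δ \ {(∅, A)}, or (b) common-LHS removal: if the attribute A belongs to the left-hand side of every FD in Δ, replace Δ by Δ_{-A} := {(Z \ {A}, B) : (Z, B) ∈ Δ}. Then Δ reduces to the empty set by a finite sequence of simplification steps if and only if Δ is an LHS-chain, i.e., for every two FDs (X₁, Y₁), (X₂, Y₂) ∈ Δ, either X₁ ⊆ X₂ or X₂ ⊆ X₁. -/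
/-- `Δ` is an LHS-chain: the left-hand sides of any two FDs in `Δ` are comparable
under inclusion. -/
def IsLHSChain {ι : Type*} (Δ : Finset (Finset ι × ι)) : Prop :=
  ∀ f₁ ∈ Δ, ∀ f₂ ∈ Δ, f₁.1 ⊆ f₂.1 ∨ f₂.1 ⊆ f₁.1

/-- A single simplification step on finite FD sets: either remove a consensus FD
`(∅, A)`, or remove a common-LHS attribute `A` from the left-hand side of every FD. -/
inductive SimpStep {ι : Type*} [DecidableEq ι] :
    Finset (Finset ι × ι) → Finset (Finset ι × ι) → Prop
  | consensus (Δ : Finset (Finset ι × ι)) (A : ι) (h : ((∅ : Finset ι), A) ∈ Δ) :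
      SimpStep Δ (Δ.erase (∅, A))
  | commonLHS (Δ : Finset (Finset ι × ι)) (A : ι) (h : ∀ f ∈ Δ, A ∈ f.1) :
      SimpStep Δ (Δ.image fun f => (f.1.erase A, f.2))

/-!
Simplification steps reflect LHS-chains: a consensus FD has the smallest
possible left-hand side, and removing a common attribute `A` is undone by `insert A`.
Conversely, the left-hand side of minimal size in a nonempty LHS-chain is contained in all the
others; if it is empty it is a consensus FD, otherwise each of its attributes is a common LHS.
Either step yields an LHS-chain again and strictly decreases `∑ (|X| + 1)` over the FDs `(X, A)`.
-/

open Finset Relation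

section

variable {ι : Type*}

namespace IsLHSChain

theorem mono {Δ Δ' : Finset (Finset ι × ι)} (hc : IsLHSChain Δ) (h : Δ' ⊆ Δ) :
    IsLHSChain Δ' :=
  fun f₁ h₁ f₂ h₂ => hc f₁ (h h₁) f₂ (h h₂)

theorem image_erase_lhs [DecidableEq ι] {Δ : Finset (Finset ι × ι)} (hc : IsLHSChain Δ)
    (A : ι) : IsLHSChain (Δ.image fun f => (f.1.erase A, f.2)) := by
  simp only [IsLHSChain, mem_image]
  rintro _ ⟨f₁, h₁, rfl⟩ _ ⟨f₂, h₂, rfl⟩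
  exact (hc f₁ h₁ f₂ h₂).imp (erase_subset_erase A) (erase_subset_erase A)

theorem exists_lhs_subset_all {Δ : Finset (Finset ι × ι)} (hc : IsLHSChain Δ)
    (hne : Δ.Nonempty) : ∃ f₀ ∈ Δ, ∀ f ∈ Δ, f₀.1 ⊆ f.1 := by
  obtain ⟨f₀, hf₀, hmin⟩ := Δ.exists_min_image (fun f => #f.1) hne
  refine ⟨f₀, hf₀, fun f hf => ?_⟩
  rcases hc f₀ hf₀ f hf with h | h
  · exact h
  · exact (eq_of_subset_of_card_le h (hmin f hf)).symm.subset

theorem of_simpStep [DecidableEq ι] {Δ Δ' : Finset (Finset ι × ι)} (h : SimpStep Δ Δ')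
    (hc : IsLHSChain Δ') : IsLHSChain Δ := by
  intro f₁ h₁ f₂ h₂
  cases h with
  | consensus A _ =>
    by_cases e₁ : f₁ = (∅, A)
    · simp [e₁]
    by_cases e₂ : f₂ = (∅, A)
    · simp [e₂]
    exact hc f₁ (mem_erase.2 ⟨e₁, h₁⟩) f₂ (mem_erase.2 ⟨e₂, h₂⟩)
  | commonLHS A hA =>
    have hsubset : ∀ {X Y : Finset ι}, A ∈ X → A ∈ Y → X.erase A ⊆ Y.erase A → X ⊆ Y :=
      fun hX hY hXY => by
        rw [← insert_erase hX, ← insert_erase hY]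
        exact insert_subset_insert A hXY
    exact (hc _ (mem_image_of_mem _ h₁) _ (mem_image_of_mem _ h₂)).imp
      (hsubset (hA f₁ h₁) (hA f₂ h₂)) (hsubset (hA f₂ h₂) (hA f₁ h₁))

theorem exists_simpStep [DecidableEq ι] {Δ : Finset (Finset ι × ι)} (hc : IsLHSChain Δ)
    (hne : Δ.Nonempty) : ∃ Δ', SimpStep Δ Δ' ∧ IsLHSChain Δ' := by
  obtain ⟨⟨X, B⟩, hf₀, hsub⟩ := hc.exists_lhs_subset_all hne
  obtain rfl | ⟨A, hA⟩ := X.eq_empty_or_nonempty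
  · exact ⟨_, .consensus Δ B hf₀, hc.mono (erase_subset _ _)⟩
  · exact ⟨_, .commonLHS Δ A fun f hf => hsub f hf hA, hc.image_erase_lhs A⟩

end IsLHSChain

def lhsWeight (Δ : Finset (Finset ι × ι)) : ℕ :=
  ∑ f ∈ Δ, (#f.1 + 1)

theorem SimpStep.lhsWeight_lt [DecidableEq ι] {Δ Δ' : Finset (Finset ι × ι)}
    (h : SimpStep Δ Δ') (hne : Δ.Nonempty) : lhsWeight Δ' < lhsWeight Δ := by
  cases h with
  | consensus A hA =>
    rw [lhsWeight, lhsWeight, ← sum_erase_add Δ _ hA]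
    omega
  | commonLHS A hA =>
    calc lhsWeight (Δ.image fun f => (f.1.erase A, f.2))
        ≤ ∑ f ∈ Δ, (#(f.1.erase A) + 1) := sum_image_le_of_nonneg fun _ _ => Nat.zero_le _
      _ < lhsWeight Δ := sum_lt_sum_of_nonempty hne fun f hf => by
          rw [card_erase_of_mem (hA f hf)]
          have := card_pos.2 ⟨A, hA f hf⟩
          omega

theorem IsLHSChain.reflTransGen_simpStep_empty [DecidableEq ι] {Δ : Finset (Finset ι × ι)}
    (hc : IsLHSChain Δ) : ReflTransGen SimpStep Δ ∅ := by
  obtain rfl | hne := Δ.eq_empty_or_nonempty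
  · exact .refl
  obtain ⟨Δ', hstep, hc'⟩ := hc.exists_simpStep hne
  have := hstep.lhsWeight_lt hne
  exact .head hstep hc'.reflTransGen_simpStep_empty
termination_by lhsWeight Δ

theorem isLHSChain_of_reflTransGen_simpStep_empty [DecidableEq ι] {Δ : Finset (Finset ι × ι)}
    (h : ReflTransGen SimpStep Δ ∅) : IsLHSChain Δ := by
  induction h using ReflTransGen.head_induction_on with
  | refl => simp [IsLHSChain]
  | head hstep _ ih => exact ih.of_simpStep hstep

end

theorem reduces_to_empty_iff_lhs_chain_general {ι : Type*} [DecidableEq ι]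
    (Δ : Finset (Finset ι × ι)) :
    Relation.ReflTransGen SimpStep Δ ∅ ↔ IsLHSChain Δ :=
  ⟨isLHSChain_of_reflTransGen_simpStep_empty, IsLHSChain.reflTransGen_simpStep_empty⟩

/-- Proposition 3.6: a finite set `Δ` of FDs reduces to the empty set by a finite
sequence of consensus-FD and common-LHS simplification steps if and only if `Δ` is an
LHS-chain. -/
theorem reduces_to_empty_iff_lhs_chain {ι : Type*} [DecidableEq ι]
    (Δ : Finset (Finset ι × ι)) (hleg : ∀ f ∈ Δ, f.2 ∉ f.1) :
    Relation.ReflTransGen SimpStep Δ ∅ ↔ IsLHSChain Δ :=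
  reduces_to_empty_iff_lhs_chain_general Δ
end

section
/- (Correctness of the 3-SAT reduction underlying Theorem 3.1.) Let n, m ≥ 1 and let C : Fin m → Fin 3 → (Fin n × Bool) encode a 3-CNF formula φ with clauses c_j (j ∈ Fin m), where the literal (v, b) means variable v with polarity b. Let R ⊆ (Fin n) × Bool × (Fin m) be the finite set R := {(v, b, j) : ∃ i ∈ Fin 3, C j i = (v, b)}. Then the following are equivalent: (1) φ is satisfiable, i.e., there exists σ : Fin n → Bool such that for every j ∈ Fin m there is i ∈ Fin 3 with σ (C j i).1 = (C j i).2; (2) there exists R' ⊆ R with |R'| ≥ m such that (a) for all t₁, t₂ ∈ R', t₁.1 = t₂.1 implies t₁.2.1 = t₂.2.1 (the FD A → B holds), and (b) for every j ∈ Fin m, |R'| ≤ m · |{t ∈ R' : t.2.2 = j}| (each clause value has frequency at least 1/m in R'). -/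
/-!
A satisfying assignment gives `R'` by retaining one true literal in each clause: one tuple per
clause, so `|R'| = m` and every clause has frequency exactly `1/m`, and the FD holds because all
retained literals agree with the same assignment. Conversely, `|R'| ≥ m ≥ 1` and the frequency
bound force every clause to occur in `R'`; by the FD the polarities occurring in `R'` define an
assignment (`false` on absent variables) making each retained literal, hence each clause, true.
-/

open Finset

theorem Finset.nonempty_of_card_le_mul {α β : Type*} {s : Finset α} {t : Finset β} {m : ℕ}
    (hs : 0 < #s) (h : #s ≤ m * #t) : t.Nonempty := by
  rw [← card_pos]
  by_contra! ht
  rw [Nat.le_zero.1 ht, mul_zero] at h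
  omega

section

variable {V J ι : Type*}

def retainedTuple (C : J → ι → V × Bool) (i : J → ι) (j : J) : V × Bool × J :=
  ((C j (i j)).1, (C j (i j)).2, j)

theorem retainedTuple_injective (C : J → ι → V × Bool) (i : J → ι) :
    Function.Injective (retainedTuple C i) :=
  fun _ _ h => congrArg (fun t => t.2.2) h

variable [Fintype J] [DecidableEq V] [DecidableEq J]

theorem card_image_retainedTuple (C : J → ι → V × Bool) (i : J → ι) :
    #(univ.image (retainedTuple C i)) = Fintype.card J := by
  rw [card_image_of_injective _ (retainedTuple_injective C i), card_univ]

theorem filter_image_retainedTuple (C : J → ι → V × Bool) (i : J → ι) (j : J) :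
    (univ.image (retainedTuple C i)).filter (fun t => t.2.2 = j) = {retainedTuple C i j} := by
  ext t
  constructor
  · simp only [mem_filter, mem_image, mem_univ, true_and, mem_singleton]
    rintro ⟨⟨k, rfl⟩, rfl⟩
    rfl
  · intro ht
    rw [mem_singleton.1 ht]
    simp [retainedTuple]

theorem retainedTuple_consistent {C : J → ι → V × Bool} {σ : V → Bool} {i : J → ι}
    (hi : ∀ j, σ (C j (i j)).1 = (C j (i j)).2) :
    ∀ t₁ ∈ univ.image (retainedTuple C i), ∀ t₂ ∈ univ.image (retainedTuple C i),
      t₁.1 = t₂.1 → t₁.2.1 = t₂.2.1 := by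
  simp only [mem_image, mem_univ, true_and]
  rintro _ ⟨j₁, rfl⟩ _ ⟨j₂, rfl⟩ h
  simp only [retainedTuple] at h ⊢
  rw [← hi j₁, ← hi j₂, h]

end

section

variable {V J : Type*} [DecidableEq V]

def assignmentOf (R : Finset (V × Bool × J)) (v : V) : Bool :=
  decide (∃ t ∈ R, t.1 = v ∧ t.2.1 = true)

theorem assignmentOf_eq_of_mem {R : Finset (V × Bool × J)}
    (hFD : ∀ t₁ ∈ R, ∀ t₂ ∈ R, t₁.1 = t₂.1 → t₁.2.1 = t₂.2.1) {t : V × Bool × J} (ht : t ∈ R) :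
    assignmentOf R t.1 = t.2.1 := by
  cases hb : t.2.1
  · simp only [assignmentOf, decide_eq_false_iff_not, not_exists, not_and]
    intro t' ht' h1 h2
    simpa [h2, hb] using hFD t' ht' t ht h1
  · exact decide_eq_true ⟨t, ht, rfl, hb⟩

end

theorem threeSat_reduction_correct_general (n m : ℕ)
    (C : Fin m → Fin 3 → Fin n × Bool) :
    (∃ σ : Fin n → Bool, ∀ j : Fin m, ∃ i : Fin 3, σ (C j i).1 = (C j i).2) ↔
    (∃ R' ⊆ (Finset.univ.filter
        (fun t : Fin n × Bool × Fin m => ∃ i : Fin 3, C t.2.2 i = (t.1, t.2.1))),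
      m ≤ R'.card ∧
      (∀ t₁ ∈ R', ∀ t₂ ∈ R', t₁.1 = t₂.1 → t₁.2.1 = t₂.2.1) ∧
      (∀ j : Fin m, R'.card ≤ m * (R'.filter fun t => t.2.2 = j).card)) := by
  constructor
  · rintro ⟨σ, hσ⟩
    choose i hi using hσ
    refine ⟨univ.image (retainedTuple C i), ?_, ?_, retainedTuple_consistent hi, fun j => ?_⟩
    · simp only [subset_iff, mem_image, mem_filter, mem_univ, true_and]
      rintro _ ⟨j, rfl⟩
      exact ⟨i j, rfl⟩
    · rw [card_image_retainedTuple, Fintype.card_fin]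
    · rw [card_image_retainedTuple, filter_image_retainedTuple, card_singleton,
        Fintype.card_fin, mul_one]
  · rintro ⟨R', hsub, hcard, hFD, hfreq⟩
    refine ⟨assignmentOf R', fun j => ?_⟩
    obtain ⟨t, ht⟩ := nonempty_of_card_le_mul (by have := j.pos; omega) (hfreq j)
    obtain ⟨htR, rfl⟩ := mem_filter.1 ht
    obtain ⟨i, hi⟩ := (mem_filter.1 (hsub htR)).2
    exact ⟨i, by rw [hi]; exact assignmentOf_eq_of_mem hFD htR⟩

/-- Correctness of the 3-SAT reduction underlying Theorem 3.1.  The 3-CNF formula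
encoded by `C` (clause `j` consists of the three literals `C j 0, C j 1, C j 2`, where a
literal `(v, b)` means variable `v` with polarity `b`) is satisfiable if and only if the
relation `R := {(v, b, j) : literal (v, b) occurs in clause j}` has a subset `R'` of size
at least `m` that satisfies the FD `A → B` and in which every clause value has frequency
at least `1/m`. -/
theorem threeSat_reduction_correct (n m : ℕ) (hn : 1 ≤ n) (hm : 1 ≤ m)
    (C : Fin m → Fin 3 → Fin n × Bool) :
    (∃ σ : Fin n → Bool, ∀ j : Fin m, ∃ i : Fin 3, σ (C j i).1 = (C j i).2) ↔
    (∃ R' ⊆ (Finset.univ.filter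
        (fun t : Fin n × Bool × Fin m => ∃ i : Fin 3, C t.2.2 i = (t.1, t.2.1))),
      m ≤ R'.card ∧
      (∀ t₁ ∈ R', ∀ t₂ ∈ R', t₁.1 = t₂.1 → t₁.2.1 = t₂.2.1) ∧
      (∀ j : Fin m, R'.card ≤ m * (R'.filter fun t => t.2.2 = j).card)) :=
  threeSat_reduction_correct_general n m C
end

section
/- (Correctness of the reduction from exact colored matching, Lemma C.1.) Let U, V be types, E a finite set of pairs in U × V (a bipartite edge set), k ≥ 1, c : U × V → Fin k an edge coloring, φ : Fin k → ℕ a color constraint, and T := Σ_{i} φ(i). Let R := {(u, v, c (u, v)) : (u, v) ∈ E} ⊆ U × V × Fin k. Then the following are equivalent: (1) there exists a matching M ⊆ E (i.e., for all e₁, e₂ ∈ M, e₁.1 = e₂.1 → e₁ = e₂ and e₁.2 = e₂.2 → e₁ = e₂) with exactly φ(i) edges of color i for every i ∈ Fin k; (2) there exists R' ⊆ R with |R'| ≥ T such that for all t₁, t₂ ∈ R': t₁.1 = t₂.1 → t₁.2.1 = t₂.2.1, t₁.2.1 = t₂.2.1 → t₁.1 = t₂.1, and t₁.1 = t₂.1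 → t₁.2.2 = t₂.2.2 (the FDs A → B, B → A, A → C), and for every i ∈ Fin k, T · |{t ∈ R' : t.2.2 = i}| ≥ φ(i) · |R'| (the representation constraint %c_i ≥ φ(i)/T). -/
/-!
A matching `M ⊆ E` is carried by `e ↦ (e.1, e.2, c e)` onto a subset of `R` of the same size
with the same colour classes, and on such tagged tuples the FDs `A → B`, `B → A` say exactly
that `M` is a matching (`A → C` is automatic). So both sides talk about sub-matchings of `E`,
one with colour classes of size exactly `φ i`, the other of total size at least `T` with
proportions at least `φ i / T`. The latter force every colour class to have at least `φ i`
edges, and keeping exactly `φ i` edges of each colour gives a sub-matching of the former kind.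
-/

open Finset

theorem Nat.le_of_mul_le_mul_of_le_of_le {a m n T : ℕ} (haT : a ≤ T) (hTn : T ≤ n)
    (h : a * n ≤ T * m) : a ≤ m := by
  rcases T.eq_zero_or_pos with rfl | hT
  · omega
  · refine Nat.le_of_mul_le_mul_left ?_ hT
    calc T * a = a * T := mul_comm T a
      _ ≤ a * n := Nat.mul_le_mul_left a hTn
      _ ≤ T * m := h

section ColorClasses

variable {α ι : Type*} [Fintype ι] [DecidableEq ι] (f : α → ι)

theorem Finset.card_eq_sum_of_card_filter_eq {s : Finset α} {n : ι → ℕ}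
    (h : ∀ i, #(s.filter (f · = i)) = n i) : #s = ∑ i, n i := by
  rw [card_eq_sum_card_fiberwise (f := f) (t := univ) fun x _ => mem_univ (f x)]
  exact sum_congr rfl fun i _ => h i

theorem Finset.exists_subset_card_filter_eq [DecidableEq α] {s : Finset α} {n : ι → ℕ}
    (h : ∀ i, n i ≤ #(s.filter (f · = i))) :
    ∃ t ⊆ s, ∀ i, #(t.filter (f · = i)) = n i := by
  choose S hS hcard using fun i => exists_subset_card_eq (h i)
  have hSf : ∀ i, ∀ x ∈ S i, f x = i := fun i x hx => (mem_filter.1 (hS i hx)).2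
  refine ⟨univ.biUnion S, fun x hx => ?_, fun i => ?_⟩
  · obtain ⟨i, -, hx⟩ := mem_biUnion.1 hx
    exact filter_subset _ _ (hS i hx)
  · rw [← hcard i]
    congr 1
    ext x
    simp only [mem_filter, mem_biUnion, mem_univ, true_and]
    constructor
    · rintro ⟨⟨j, hx⟩, rfl⟩
      rwa [hSf j x hx]
    · exact fun hx => ⟨⟨i, hx⟩, hSf i x hx⟩

theorem exists_card_filter_eq_iff_exists_proportion_le [DecidableEq α]
    {P : Finset α → Prop} (hP : ∀ ⦃s t⦄, t ⊆ s → P s → P t) (E : Finset α) (n : ι → ℕ) :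
    (∃ s ⊆ E, P s ∧ ∀ i, #(s.filter (f · = i)) = n i) ↔
      ∃ s ⊆ E, ∑ i, n i ≤ #s ∧ P s ∧
        ∀ i, n i * #s ≤ (∑ j, n j) * #(s.filter (f · = i)) := by
  constructor
  · rintro ⟨s, hsE, hPs, hcard⟩
    have hs := card_eq_sum_of_card_filter_eq f hcard
    exact ⟨s, hsE, hs.ge, hPs, fun i => by rw [hcard i, hs, mul_comm]⟩
  · rintro ⟨s, hsE, hsum, hPs, hprop⟩
    have hle : ∀ i, n i ≤ #(s.filter (f · = i)) := fun i =>
      Nat.le_of_mul_le_mul_of_le_of_le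
        (single_le_sum (fun j _ => Nat.zero_le (n j)) (mem_univ i)) hsum (hprop i)
    obtain ⟨t, hts, hcard⟩ := exists_subset_card_filter_eq f hle
    exact ⟨t, hts.trans hsE, hP hts hPs, hcard⟩

end ColorClasses

theorem Finset.exists_subset_image_iff {α β : Type*} [DecidableEq β] {f : α → β} {E : Finset α}
    {Q : Finset β → Prop} : (∃ R ⊆ E.image f, Q R) ↔ ∃ M ⊆ E, Q (M.image f) := by
  simp only [subset_image_iff]
  constructor
  · rintro ⟨_, ⟨M, hME, rfl⟩, hQ⟩
    exact ⟨M, hME, hQ⟩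
  · rintro ⟨M, hME, hQ⟩
    exact ⟨_, ⟨M, hME, rfl⟩, hQ⟩

section ColoredEdges

variable {U V ι : Type*} (c : U × V → ι)

theorem colorTag_injective : Function.Injective fun e : U × V => (e.1, e.2, c e) :=
  fun _ _ h => Prod.ext (congrArg Prod.fst h :) (congrArg (·.2.1) h :)

variable [DecidableEq U] [DecidableEq V] [DecidableEq ι] (M : Finset (U × V))

theorem card_image_colorTag : #(M.image fun e => (e.1, e.2, c e)) = #M :=
  card_image_of_injective M (colorTag_injective c)

theorem card_filter_image_colorTag (i : ι) :
    #((M.image fun e => (e.1, e.2, c e)).filter fun t => t.2.2 = i) =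
      #(M.filter fun e => c e = i) := by
  rw [filter_image, card_image_of_injective _ (colorTag_injective c)]

theorem functionalDeps_image_colorTag_iff :
    (∀ t₁ ∈ M.image (fun e => (e.1, e.2, c e)), ∀ t₂ ∈ M.image (fun e => (e.1, e.2, c e)),
        (t₁.1 = t₂.1 → t₁.2.1 = t₂.2.1) ∧ (t₁.2.1 = t₂.2.1 → t₁.1 = t₂.1) ∧
        (t₁.1 = t₂.1 → t₁.2.2 = t₂.2.2)) ↔
      ∀ e₁ ∈ M, ∀ e₂ ∈ M, (e₁.1 = e₂.1 → e₁ = e₂) ∧ (e₁.2 = e₂.2 → e₁ = e₂) := by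
  simp only [forall_mem_image]
  refine forall₂_congr fun e₁ _ => forall₂_congr fun e₂ _ => ?_
  constructor
  · rintro ⟨hAB, hBA, -⟩
    exact ⟨fun h => Prod.ext h (hAB h), fun h => Prod.ext (hBA h) h⟩
  · rintro ⟨hA, hB⟩
    exact ⟨fun h => by rw [hA h], fun h => by rw [hB h], fun h => by rw [hA h]⟩

end ColoredEdges

theorem exact_colored_matching_reduction_general {U V : Type*} [DecidableEq U] [DecidableEq V]
    (E : Finset (U × V)) (k : ℕ)
    (c : U × V → Fin k) (φ : Fin k → ℕ) :
    (∃ M ⊆ E,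
        (∀ e₁ ∈ M, ∀ e₂ ∈ M, (e₁.1 = e₂.1 → e₁ = e₂) ∧ (e₁.2 = e₂.2 → e₁ = e₂)) ∧
        (∀ i : Fin k, (M.filter fun e => c e = i).card = φ i)) ↔
    (∃ R' ⊆ E.image (fun e => (e.1, e.2, c e)),
        (∑ i, φ i) ≤ R'.card ∧
        (∀ t₁ ∈ R', ∀ t₂ ∈ R',
          (t₁.1 = t₂.1 → t₁.2.1 = t₂.2.1) ∧ (t₁.2.1 = t₂.2.1 → t₁.1 = t₂.1) ∧
          (t₁.1 = t₂.1 → t₁.2.2 = t₂.2.2)) ∧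
        (∀ i : Fin k,
          φ i * R'.card ≤ (∑ j, φ j) * (R'.filter fun t => t.2.2 = i).card)) := by
  have hereditary : ∀ ⦃M N : Finset (U × V)⦄, N ⊆ M →
      (∀ e₁ ∈ M, ∀ e₂ ∈ M, (e₁.1 = e₂.1 → e₁ = e₂) ∧ (e₁.2 = e₂.2 → e₁ = e₂)) →
      ∀ e₁ ∈ N, ∀ e₂ ∈ N, (e₁.1 = e₂.1 → e₁ = e₂) ∧ (e₁.2 = e₂.2 → e₁ = e₂) :=
    fun _ _ hNM hM e₁ he₁ e₂ he₂ => hM e₁ (hNM he₁) e₂ (hNM he₂)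
  rw [exists_card_filter_eq_iff_exists_proportion_le c hereditary, exists_subset_image_iff]
  simp only [card_image_colorTag, card_filter_image_colorTag, functionalDeps_image_colorTag_iff]

/-- Correctness of the reduction from exact colored matching (Lemma C.1).  Given a
bipartite edge set `E ⊆ U × V`, an edge coloring `c` with `k` colors, and a color
constraint `φ` with `T := ∑ i, φ i`, the graph has a matching with exactly `φ i` edges
of each color `i` if and only if the relation `R := {(u, v, c(u, v)) : (u, v) ∈ E}` has
a subset `R'` of size at least `T` satisfying the FDs `A → B`, `B → A`, `A → C` and the
representation constraint `%cᵢ ≥ φ(i)/T` for every color `i`. -/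
theorem exact_colored_matching_reduction {U V : Type*} [DecidableEq U] [DecidableEq V]
    (E : Finset (U × V)) (k : ℕ) (hk : 1 ≤ k)
    (c : U × V → Fin k) (φ : Fin k → ℕ) :
    (∃ M ⊆ E,
        (∀ e₁ ∈ M, ∀ e₂ ∈ M, (e₁.1 = e₂.1 → e₁ = e₂) ∧ (e₁.2 = e₂.2 → e₁ = e₂)) ∧
        (∀ i : Fin k, (M.filter fun e => c e = i).card = φ i)) ↔
    (∃ R' ⊆ E.image (fun e => (e.1, e.2, c e)),
        (∑ i, φ i) ≤ R'.card ∧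
        (∀ t₁ ∈ R', ∀ t₂ ∈ R',
          (t₁.1 = t₂.1 → t₁.2.1 = t₂.2.1) ∧ (t₁.2.1 = t₂.2.1 → t₁.1 = t₂.1) ∧
          (t₁.1 = t₂.1 → t₁.2.2 = t₂.2.2)) ∧
        (∀ i : Fin k,
          φ i * R'.card ≤ (∑ j, φ j) * (R'.filter fun t => t.2.2 = i).card)) :=
  exact_colored_matching_reduction_general E k c φ
end
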